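/- The semi-group of integer weight functions is generated by the perfect matchings: with E a finite set and σ₀, σ₁ permutations of E, every integer weight function ν of degree d (a function ν : E → ℤ_{≥0} whose sum over every cycle of σ₀ and every cycle of σ₁ equals d) can be written as a sum ν = m₁ + m₂ + ⋯ + m_d of (indicator functions of) d perfect matchings. -/
import Mathlib

open Finset

variable {E : Type*}

/-- A perfect matching of `(E, σ₀, σ₁)`: a `{0,1}`-valued function on `E` such that every
cycle (orbit) of `σ₀` and every cycle of `σ₁` contains exactly one element with value `1`. -/
def IsPerfectMatching (σ₀ σ₁ : Equiv.Perm E) (m : E → ℕ) : Prop :=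
  (∀ e, m e = 0 ∨ m e = 1) ∧
  (∀ e, ∃! e', σ₀.SameCycle e e' ∧ m e' = 1) ∧
  (∀ e, ∃! e', σ₁.SameCycle e e' ∧ m e' = 1)

/-- The setoid on `E` whose classes are the cycles of `σ`. -/
def cycSetoid (σ : Equiv.Perm E) : Setoid E :=
  ⟨σ.SameCycle, ⟨fun _ => Equiv.Perm.SameCycle.refl _ _,
    Equiv.Perm.SameCycle.symm, Equiv.Perm.SameCycle.trans⟩⟩

section aux

variable [Fintype E] [DecidableEq E]

instance cycSetoid.decEq (σ : Equiv.Perm E) : DecidableEq (Quotient (cycSetoid σ)) :=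
  fun a b => Quotient.recOnSubsingleton₂ a b fun x y =>
    decidable_of_iff (σ.SameCycle x y)
      ⟨fun h => Quotient.sound h, fun h => Quotient.exact h⟩

instance cycSetoid.fin (σ : Equiv.Perm E) : Fintype (Quotient (cycSetoid σ)) :=
  @Quotient.fintype E _ (cycSetoid σ)
    (fun x y => (inferInstance : Decidable (σ.SameCycle x y)))

lemma sum_class {σ : Equiv.Perm E} {ν : E → ℕ} {d : ℕ}
    (h : ∀ e : E, ∑ e' ∈ univ.filter (fun e' => σ.SameCycle e e'), ν e' = d)
    (q : Quotient (cycSetoid σ)) :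
    ∑ e ∈ univ.filter (fun e => Quotient.mk (cycSetoid σ) e = q), ν e = d := by
  induction q using Quotient.ind with
  | _ e =>
    rw [← h e]
    apply Finset.sum_congr _ (fun _ _ => rfl)
    ext x
    simp only [mem_filter, mem_univ, true_and]
    exact ⟨fun hx => (Quotient.exact hx).symm, fun hx => Quotient.sound hx.symm⟩

lemma sum_over_set {σ : Equiv.Perm E} {ν : E → ℕ} {d : ℕ}
    (h : ∀ e : E, ∑ e' ∈ univ.filter (fun e' => σ.SameCycle e e'), ν e' = d)
    (s : Finset (Quotient (cycSetoid σ))) :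
    ∑ e ∈ univ.filter (fun e => Quotient.mk (cycSetoid σ) e ∈ s), ν e = d * s.card := by
  rw [← Finset.sum_fiberwise_eq_sum_filter univ s (Quotient.mk (cycSetoid σ)) ν]
  rw [Finset.sum_congr rfl (fun q _ => sum_class h q)]
  simp [mul_comm]

lemma sum_matching {σ : Equiv.Perm E} {m : E → ℕ} (h01 : ∀ e, m e = 0 ∨ m e = 1)
    (h : ∀ e, ∃! e', σ.SameCycle e e' ∧ m e' = 1) (e : E) :
    ∑ e' ∈ univ.filter (fun e' => σ.SameCycle e e'), m e' = 1 := by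
  obtain ⟨e', ⟨hc, hm⟩, huniq⟩ := h e
  rw [Finset.sum_eq_single_of_mem e' (by simp [hc])]
  · exact hm
  · intro b hb hne
    rcases h01 b with h0 | h1
    · exact h0
    · exact absurd (huniq b ⟨(mem_filter.mp hb).2, h1⟩) hne

end aux

/-- Every integer weight function of degree `d` (a nonnegative-integer-valued function whose
sum over every cycle of `σ₀` and every cycle of `σ₁` equals `d`) is a sum of `d` perfect
matchings. -/
theorem weight_eq_sum_of_perfectMatchings
    [Fintype E] [DecidableEq E] (σ₀ σ₁ : Equiv.Perm E) (ν : E → ℕ) (d : ℕ)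
    (h₀ : ∀ e : E, ∑ e' ∈ univ.filter (fun e' => σ₀.SameCycle e e'), ν e' = d)
    (h₁ : ∀ e : E, ∑ e' ∈ univ.filter (fun e' => σ₁.SameCycle e e'), ν e' = d) :
    ∃ M : Fin d → (E → ℕ),
      (∀ i, IsPerfectMatching σ₀ σ₁ (M i)) ∧ ν = ∑ i, M i := by
  induction d generalizing ν with
  | zero =>
    refine ⟨Fin.elim0, fun i => i.elim0, ?_⟩
    funext e
    have h := h₀ e
    have he : e ∈ univ.filter (fun e' => σ₀.SameCycle e e') := by
      simp [Equiv.Perm.SameCycle.refl]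
    have hle := Finset.single_le_sum (f := ν) (fun _ _ => Nat.zero_le _) he
    rw [h] at hle
    simp only [Finset.univ_eq_empty, Finset.sum_empty, Pi.zero_apply]
    omega
  | succ n ih =>
    set Q₀ := Quotient (cycSetoid σ₀) with hQ₀
    set Q₁ := Quotient (cycSetoid σ₁) with hQ₁
    set mk₀ : E → Q₀ := Quotient.mk (cycSetoid σ₀) with hmk₀
    set mk₁ : E → Q₁ := Quotient.mk (cycSetoid σ₁) with hmk₁
    set t : Q₀ → Finset Q₁ :=
      fun q => (univ.filter (fun e => mk₀ e = q ∧ ν e ≠ 0)).image mk₁ with ht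
    -- Hall's condition
    have hall : ∀ s : Finset Q₀, s.card ≤ (s.biUnion t).card := by
      intro s
      have key : (n + 1) * s.card ≤ (n + 1) * (s.biUnion t).card := by
        rw [← sum_over_set h₀ s, ← sum_over_set h₁ (s.biUnion t)]
        rw [← Finset.sum_filter_ne_zero (univ.filter (fun e => mk₀ e ∈ s)) (f := ν)]
        apply Finset.sum_le_sum_of_subset
        intro e he
        simp only [mem_filter, mem_univ, true_and] at he ⊢
        obtain ⟨hes, hne⟩ := he
        exact Finset.mem_biUnion.mpr ⟨mk₀ e, hes,
          Finset.mem_image.mpr ⟨e, by simp [hne], rfl⟩⟩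
      exact Nat.le_of_mul_le_mul_left key (Nat.succ_pos n)
    obtain ⟨f, hfinj, hft⟩ := (Finset.all_card_le_biUnion_card_iff_exists_injective t).mp hall
    -- card Q₀ = card Q₁
    have hcard : Fintype.card Q₀ = Fintype.card Q₁ := by
      have e₀ := sum_over_set h₀ (univ : Finset Q₀)
      have e₁ := sum_over_set h₁ (univ : Finset Q₁)
      simp only [mem_univ, Finset.filter_true, Finset.card_univ] at e₀ e₁
      exact Nat.eq_of_mul_eq_mul_left (Nat.succ_pos n) (e₀ ▸ e₁ ▸ rfl)
    have hfbij : Function.Bijective f :=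
      (Fintype.bijective_iff_injective_and_card f).mpr ⟨hfinj, hcard⟩
    set F : Q₀ ≃ Q₁ := Equiv.ofBijective f hfbij with hF
    -- choose an edge in each class
    have hch : ∀ q : Q₀, ∃ e : E, mk₀ e = q ∧ ν e ≠ 0 ∧ mk₁ e = f q := by
      intro q
      obtain ⟨e, he, hmk⟩ := Finset.mem_image.mp (hft q)
      simp only [mem_filter, mem_univ, true_and] at he
      exact ⟨e, he.1, he.2, hmk⟩
    choose c hc₀ hcν hc₁ using hch
    set m : E → ℕ := fun e => if e = c (mk₀ e) then 1 else 0 with hm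
    have hm01 : ∀ e, m e = 0 ∨ m e = 1 := by
      intro e
      by_cases h : e = c (mk₀ e)
      · right; show (if e = c (mk₀ e) then 1 else 0) = 1; rw [if_pos h]
      · left; show (if e = c (mk₀ e) then 1 else 0) = 0; rw [if_neg h]
    have hmc : ∀ q : Q₀, m (c q) = 1 := by
      intro q
      show (if c q = c (mk₀ (c q)) then 1 else 0) = 1
      rw [if_pos (by rw [hc₀ q])]
    have hmeq : ∀ e, m e = 1 → e = c (mk₀ e) := by
      intro e h
      by_contra hne
      have h0 : m e = 0 := by
        show (if e = c (mk₀ e) then 1 else 0) = 0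
        rw [if_neg hne]
      omega
    -- m is a perfect matching
    have hpm₀ : ∀ e, ∃! e', σ₀.SameCycle e e' ∧ m e' = 1 := by
      intro e
      refine ⟨c (mk₀ e), ⟨?_, hmc _⟩, ?_⟩
      · exact (Quotient.exact (hc₀ (mk₀ e)) : σ₀.SameCycle (c (mk₀ e)) e).symm
      · rintro y ⟨hsc, hy⟩
        have : mk₀ y = mk₀ e := Quotient.sound hsc.symm
        rw [hmeq y hy, this]
    have hpm₁ : ∀ e, ∃! e', σ₁.SameCycle e e' ∧ m e' = 1 := by
      intro e
      refine ⟨c (F.symm (mk₁ e)), ⟨?_, hmc _⟩, ?_⟩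
      · have : mk₁ (c (F.symm (mk₁ e))) = mk₁ e := by
          rw [hc₁]
          exact F.apply_symm_apply (mk₁ e)
        exact (Quotient.exact this : σ₁.SameCycle _ e).symm
      · rintro y ⟨hsc, hy⟩
        have hy' : y = c (mk₀ y) := hmeq y hy
        have h1 : mk₁ y = mk₁ e := Quotient.sound hsc.symm
        have h2 : f (mk₀ y) = mk₁ y := by
          conv_rhs => rw [hy', hc₁]
        have h3 : mk₀ y = F.symm (mk₁ e) := by
          apply hfinj
          rw [h2, h1]
          exact (F.apply_symm_apply (mk₁ e)).symm
        exact hy'.trans (by rw [h3])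
    have hpm : IsPerfectMatching σ₀ σ₁ m := ⟨hm01, hpm₀, hpm₁⟩
    -- m ≤ ν
    have hle : ∀ e, m e ≤ ν e := by
      intro e
      rcases hm01 e with h0 | h1
      · simp [h0]
      · have := hcν (mk₀ e)
        rw [← hmeq e h1] at this
        omega
    set ν' : E → ℕ := fun e => ν e - m e with hν'
    have hsplit : ∀ (σ : Equiv.Perm E) (e : E),
        ∑ e' ∈ univ.filter (fun e' => σ.SameCycle e e'), ν' e'
          + ∑ e' ∈ univ.filter (fun e' => σ.SameCycle e e'), m e'
          = ∑ e' ∈ univ.filter (fun e' => σ.SameCycle e e'), ν e' := by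
      intro σ e
      rw [← Finset.sum_add_distrib]
      refine Finset.sum_congr rfl fun x _ => ?_
      have := hle x
      show ν x - m x + m x = ν x
      omega
    have h₀' : ∀ e : E, ∑ e' ∈ univ.filter (fun e' => σ₀.SameCycle e e'), ν' e' = n := by
      intro e
      have := hsplit σ₀ e
      rw [h₀ e, sum_matching hm01 hpm₀ e] at this
      omega
    have h₁' : ∀ e : E, ∑ e' ∈ univ.filter (fun e' => σ₁.SameCycle e e'), ν' e' = n := by
      intro e
      have := hsplit σ₁ e
      rw [h₁ e, sum_matching hm01 hpm₁ e] at this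
      omega
    obtain ⟨M', hM'pm, hM'sum⟩ := ih ν' h₀' h₁'
    refine ⟨Fin.cons m M', ?_, ?_⟩
    · intro i
      refine Fin.cases ?_ ?_ i
      · exact hpm
      · exact fun j => hM'pm j
    · funext e
      have hsum : ν e = m e + ν' e := by
        have := hle e
        show ν e = m e + (ν e - m e)
        omega
      rw [hsum, hM'sum]
      simp [Fin.sum_univ_succ]
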